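/- For every sequence x of distinct integers of length m, the Cartesian tree of x can be reconstructed from its parent-distance table; that is, if two sequences x and y of length m with distinct elements satisfy PD_x[h] = PD_y[h] for all 1 ≤ h ≤ m, then C(x) = C(y). -/

import Mathlib

/-- Binary tree shapes (Cartesian trees are determined by their shape). -/
inductive BTree : Type
  | nil : BTree
  | node : BTree → BTree → BTree
deriving DecidableEq

namespace BTree

/-- Number of nodes. -/
def size : BTree → ℕ
  | nil => 0
  | node l r => size l + size r + 1

/-- Length of the leftmost path. -/
def LMP : BTree → ℕ
  | nil => 0
  | node l _ => LMP l + 1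

/-- Length of the rightmost path. -/
def RMP : BTree → ℕ
  | nil => 0
  | node _ r => RMP r + 1

end BTree

/-- Minimum value of a list (0 for the empty list). -/
def listMin : List ℤ → ℤ
  | [] => 0
  | a :: t => t.foldl min a

/-- Index (0-based) of the minimum of a list. -/
def minIdx (l : List ℤ) : ℕ := l.idxOf (listMin l)

/-- Cartesian tree of a list, with fuel for termination. -/
def ctreeAux : ℕ → List ℤ → BTree
  | 0, _ => .nil
  | _ + 1, [] => .nil
  | n + 1, a :: t =>
      let g := minIdx (a :: t)
      .node (ctreeAux n ((a :: t).take g)) (ctreeAux n ((a :: t).drop (g + 1)))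

/-- Cartesian tree of a list: the root is the position of the minimum,
its subtrees are the Cartesian trees of the prefix and suffix around it. -/
def ctreeL (l : List ℤ) : BTree := ctreeAux l.length l

/-- The factor x[a..b] (1-based positions) of a sequence, as a list. -/
def seqList (x : ℕ → ℤ) (a b : ℕ) : List ℤ :=
  (List.range (b + 1 - a)).map (fun k => x (a + k))

/-- Cartesian tree of the sequence x[1..m]. -/
def ctreeOf (m : ℕ) (x : ℕ → ℤ) : BTree := ctreeL (seqList x 1 m)

/-- Positions j < h (1-based) with x[j] < x[h]. -/
def PDset (x : ℕ → ℤ) (h : ℕ) : Finset ℕ :=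
  (Finset.Ico 1 h).filter (fun j => x j < x h)

/-- Parent-distance table: PD_x[h] = h - max{j < h : x[j] < x[h]}, 0 if no such j. -/
def PD (x : ℕ → ℤ) (h : ℕ) : ℕ :=
  if hs : (PDset x h).Nonempty then h - (PDset x h).max' hs else 0

/-- Positions h < j ≤ m with x[j] < x[h]. -/
def RPDset (m : ℕ) (x : ℕ → ℤ) (h : ℕ) : Finset ℕ :=
  (Finset.Ioc h m).filter (fun j => x j < x h)

/-- Reverse parent-distance table: RPD_x[h] = min{j > h : x[j] < x[h]} - h, 0 if no such j. -/
def RPD (m : ℕ) (x : ℕ → ℤ) (h : ℕ) : ℕ :=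
  if hs : (RPDset m x h).Nonempty then (RPDset m x h).min' hs - h else 0

/-- Referent of h: the smallest position j > h with x[j] < x[h], or -1 if none. -/
def refD (m : ℕ) (x : ℕ → ℤ) (h : ℕ) : ℤ :=
  if hs : (RPDset m x h).Nonempty then ((RPDset m x h).min' hs : ℤ) else -1

/-- Skipped-number table: SN_x[h] is the number of nodes on the rightmost path of the
left subtree of node h in C(x), i.e. the number of positions whose referent is h. -/
def SN (m : ℕ) (x : ℕ → ℤ) (h : ℕ) : ℕ :=
  ((Finset.Ico 1 h).filter (fun j => refD m x j = (h : ℤ))).card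

/-- The swap τ(x,i): exchange the entries at positions i and i+1. -/
def swapAt (x : ℕ → ℤ) (i : ℕ) : ℕ → ℤ :=
  fun j => if j = i then x (i + 1) else if j = i + 1 then x i else x j

/-- ng(T,i): the Cartesian trees obtained from a sequence realizing T by one swap
at position i (valid positions are 1 ≤ i ≤ m-1). -/
def ngi (m : ℕ) (T : BTree) (i : ℕ) : Set BTree :=
  { S | 1 ≤ i ∧ i + 1 ≤ m ∧ ∃ x : ℕ → ℤ, Set.InjOn x (Set.Icc 1 m) ∧
        ctreeOf m x = T ∧ S = ctreeOf m (swapAt x i) }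

/-- ng(T): the swap neighbourhood of T. -/
def ng (m : ℕ) (T : BTree) : Set BTree := ⋃ i, ngi m T i

/-- Number of permutations of {1,...,n} whose Cartesian tree is A. -/
noncomputable def permCount (n : ℕ) (A : BTree) : ℕ :=
  Set.ncard { σ : Equiv.Perm (Fin n) |
    ctreeL (List.ofFn (fun k : Fin n => ((σ k : ℕ) : ℤ) + 1)) = A }

/-- Product over all nodes t of A of the size of the subtree rooted at t. -/
def hookProd : BTree → ℕ
  | .nil => 1
  | .node l r => (BTree.node l r).size * hookProd l * hookProd r


/-! ### Auxiliary development for stmt0 -/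

section Stmt0Aux

/-- Entry of a list, default 0. -/
private def gD (l : List ℤ) (i : ℕ) : ℤ := l.getD i 0

/-- No strictly-smaller entry before position `i`. -/
private def Ql (l : List ℤ) (i : ℕ) : Prop := ∀ j < i, gD l i < gD l j

/-- `j` is the nearest smaller position to the left of `i`. -/
private def Pl (l : List ℤ) (i j : ℕ) : Prop :=
  j < i ∧ gD l j < gD l i ∧ ∀ k, j < k → k < i → gD l i < gD l k

private lemma foldl_min_le (t : List ℤ) : ∀ a : ℤ, t.foldl min a ≤ a ∧ ∀ b ∈ t, t.foldl min a ≤ b := by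
  induction t with
  | nil => intro a; exact ⟨le_refl a, by simp⟩
  | cons c t ih =>
    intro a
    obtain ⟨h1, h2⟩ := ih (min a c)
    refine ⟨h1.trans (min_le_left _ _), ?_⟩
    intro b hb
    rcases List.mem_cons.mp hb with rfl | hb
    · exact h1.trans (min_le_right _ _)
    · exact h2 b hb

private lemma foldl_min_mem (t : List ℤ) : ∀ a : ℤ, t.foldl min a = a ∨ t.foldl min a ∈ t := by
  induction t with
  | nil => intro a; exact Or.inl rfl
  | cons c t ih =>
    intro a
    rcases ih (min a c) with h | h
    · rcases le_total a c with hac | hac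
      · left; simpa [List.foldl, min_eq_left hac] using h
      · right; rw [List.foldl]; rw [h, min_eq_right hac]; exact List.mem_cons_self
    · right; exact List.mem_cons_of_mem _ h

private lemma listMin_mem {l : List ℤ} (h : l ≠ []) : listMin l ∈ l := by
  match l with
  | a :: t =>
    show t.foldl min a ∈ a :: t
    rcases foldl_min_mem t a with h' | h'
    · rw [h']; exact List.mem_cons_self
    · exact List.mem_cons_of_mem _ h'

private lemma listMin_le {l : List ℤ} {b : ℤ} (hb : b ∈ l) : listMin l ≤ b := by
  match l with
  | a :: t =>
    show t.foldl min a ≤ b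
    rcases List.mem_cons.mp hb with rfl | hb
    · exact (foldl_min_le t b).1
    · exact (foldl_min_le t a).2 b hb

private lemma minIdx_lt {l : List ℤ} (h : l ≠ []) : minIdx l < l.length :=
  List.idxOf_lt_length_iff.mpr (listMin_mem h)

private lemma getElem_minIdx {l : List ℤ} (h : l ≠ []) :
    l[minIdx l]'(minIdx_lt h) = listMin l := List.idxOf_get _

private lemma minIdx_min {l : List ℤ} (hnd : l.Nodup) (hne : l ≠ [])
    {j : ℕ} (hj : j < l.length) (hne2 : j ≠ minIdx l) : gD l (minIdx l) < gD l j := by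
  have h1 : minIdx l < l.length := minIdx_lt hne
  have hgm : gD l (minIdx l) = listMin l := by
    show l.getD _ 0 = _
    rw [List.getD_eq_getElem l 0 h1]; exact getElem_minIdx hne
  have hgd : gD l j = l[j] := List.getD_eq_getElem l 0 hj
  have hle : listMin l ≤ l[j] := listMin_le (List.getElem_mem hj)
  rcases lt_or_eq_of_le hle with h | h
  · rw [hgm, hgd]; exact h
  · exfalso
    apply hne2
    have heq : l[j] = l[minIdx l]'h1 := by rw [getElem_minIdx hne, ← h]
    exact (List.Nodup.getElem_inj_iff hnd).mp heq

private lemma ctreeAux_fuel : ∀ f₁ f₂ : ℕ, ∀ l : List ℤ, l.length ≤ f₁ → l.length ≤ f₂ →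
    ctreeAux f₁ l = ctreeAux f₂ l := by
  intro f₁
  induction f₁ with
  | zero =>
    intro f₂ l h1 _
    have : l = [] := List.length_eq_zero_iff.mp (Nat.le_zero.mp h1)
    subst this
    cases f₂ <;> rfl
  | succ f ih =>
    intro f₂ l h1 h2
    match f₂, l with
    | 0, l =>
      have : l = [] := List.length_eq_zero_iff.mp (Nat.le_zero.mp h2)
      subst this; rfl
    | f₂' + 1, [] => rfl
    | f₂' + 1, a :: t =>
      have hg : minIdx (a :: t) < (a :: t).length := minIdx_lt (by simp)
      have ht1 : t.length ≤ f := by simpa using h1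
      have ht2 : t.length ≤ f₂' := by simpa using h2
      have htake : ((a :: t).take (minIdx (a :: t))).length ≤ t.length := by
        rw [List.length_take]; simp at hg ⊢; omega
      have hdrop : ((a :: t).drop (minIdx (a :: t) + 1)).length ≤ t.length := by
        rw [List.length_drop]; simp
      show BTree.node _ _ = BTree.node _ _
      congr 1
      · exact ih f₂' _ (htake.trans ht1) (htake.trans ht2)
      · exact ih f₂' _ (hdrop.trans ht1) (hdrop.trans ht2)

private lemma ctreeL_eq {l : List ℤ} (h : l ≠ []) :
    ctreeL l = .node (ctreeL (l.take (minIdx l))) (ctreeL (l.drop (minIdx l + 1))) := by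
  match l with
  | a :: t =>
    have hg : minIdx (a :: t) < (a :: t).length := minIdx_lt (by simp)
    have htake : ((a :: t).take (minIdx (a :: t))).length ≤ t.length := by
      rw [List.length_take]; simp at hg ⊢; omega
    have hdrop : ((a :: t).drop (minIdx (a :: t) + 1)).length ≤ t.length := by
      rw [List.length_drop]; simp
    show BTree.node _ _ = BTree.node _ _
    congr 1
    · exact ctreeAux_fuel t.length _ _ htake le_rfl
    · exact ctreeAux_fuel t.length _ _ hdrop le_rfl

private lemma gD_take {l : List ℤ} {g i : ℕ} (h : i < g) : gD (l.take g) i = gD l i := by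
  unfold gD
  by_cases hi : i < l.length
  · rw [List.getD_eq_getElem _ 0 (by simp; omega), List.getD_eq_getElem _ 0 hi]
    exact List.getElem_take ..
  · rw [List.getD_eq_default _ 0 (by simp; omega), List.getD_eq_default _ 0 (by omega)]

private lemma gD_drop {l : List ℤ} {k i : ℕ} (h : k + i < l.length) :
    gD (l.drop k) i = gD l (k + i) := by
  unfold gD
  rw [List.getD_eq_getElem _ 0 (by simp; omega), List.getD_eq_getElem _ 0 h]
  rw [List.getElem_drop]

private lemma Ql_take {l : List ℤ} {g i : ℕ} (h : i < g) : Ql (l.take g) i ↔ Ql l i := by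
  unfold Ql
  constructor <;> intro hq j hj
  · have := hq j hj; rwa [gD_take h, gD_take (by omega)] at this
  · rw [gD_take h, gD_take (by omega)]; exact hq j hj

private lemma Pl_take {l : List ℤ} {g i j : ℕ} (h : i < g) : Pl (l.take g) i j ↔ Pl l i j := by
  unfold Pl
  constructor <;> rintro ⟨h1, h2, h3⟩
  · refine ⟨h1, ?_, ?_⟩
    · rwa [gD_take (by omega), gD_take h] at h2
    · intro k hk1 hk2
      have := h3 k hk1 hk2; rwa [gD_take h, gD_take (by omega)] at this
  · refine ⟨h1, ?_, ?_⟩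
    · rwa [gD_take (by omega), gD_take h]
    · intro k hk1 hk2
      rw [gD_take h, gD_take (by omega)]; exact h3 k hk1 hk2

private lemma Pl_drop {l : List ℤ} {g i j : ℕ} (hi : g + 1 + i < l.length) :
    Pl (l.drop (g + 1)) i j ↔ Pl l (g + 1 + i) (g + 1 + j) := by
  unfold Pl
  constructor <;> rintro ⟨h1, h2, h3⟩
  · refine ⟨by omega, ?_, ?_⟩
    · rwa [gD_drop (by omega), gD_drop hi] at h2
    · intro k hk1 hk2
      have hk : k = g + 1 + (k - (g + 1)) := by omega
      have := h3 (k - (g+1)) (by omega) (by omega)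
      rwa [gD_drop hi, gD_drop (by omega), ← hk] at this
  · refine ⟨by omega, ?_, ?_⟩
    · rwa [gD_drop (by omega), gD_drop hi]
    · intro k hk1 hk2
      rw [gD_drop hi, gD_drop (by omega)]
      exact h3 (g + 1 + k) (by omega) (by omega)

private lemma Ql_drop {l : List ℤ} {g i : ℕ}
    (hmin : ∀ j < l.length, j ≠ g → gD l g < gD l j)
    (hi : g + 1 + i < l.length) :
    Ql (l.drop (g + 1)) i ↔ Pl l (g + 1 + i) g := by
  unfold Ql Pl
  constructor
  · intro hq
    refine ⟨by omega, hmin _ (by omega) (by omega), ?_⟩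
    intro k hk1 hk2
    have := hq (k - (g+1)) (by omega)
    rwa [gD_drop (by omega), gD_drop (by omega), show g + 1 + (k - (g+1)) = k by omega] at this
  · rintro ⟨h1, h2, h3⟩ j hj
    rw [gD_drop (by omega), gD_drop (by omega)]
    exact h3 (g + 1 + j) (by omega) (by omega)

private lemma core : ∀ n : ℕ, ∀ l₁ l₂ : List ℤ, l₁.length = n → l₂.length = n →
    l₁.Nodup → l₂.Nodup →
    (∀ i < n, (Ql l₁ i ↔ Ql l₂ i)) →
    (∀ i < n, ∀ j, (Pl l₁ i j ↔ Pl l₂ i j)) →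
    ctreeL l₁ = ctreeL l₂ := by
  intro n
  induction n using Nat.strong_induction_on with
  | _ n ih =>
  intro l₁ l₂ hl1 hl2 hnd1 hnd2 hQ hP
  rcases Nat.eq_zero_or_pos n with rfl | hpos
  · rw [List.length_eq_zero_iff.mp hl1, List.length_eq_zero_iff.mp hl2]
  have hne1 : l₁ ≠ [] := by intro h; rw [h] at hl1; simp at hl1; omega
  have hne2 : l₂ ≠ [] := by intro h; rw [h] at hl2; simp at hl2; omega
  have hg1lt : minIdx l₁ < n := hl1 ▸ minIdx_lt hne1
  have hg2lt : minIdx l₂ < n := hl2 ▸ minIdx_lt hne2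
  have hQ1 : Ql l₁ (minIdx l₁) := fun j hj => minIdx_min hnd1 hne1 (by omega) (by omega)
  have hQ2 : Ql l₂ (minIdx l₂) := fun j hj => minIdx_min hnd2 hne2 (by omega) (by omega)
  have hnQ1 : ∀ j, minIdx l₁ < j → j < n → ¬ Ql l₁ j := by
    intro j hj1 hj2 hq
    exact absurd (hq (minIdx l₁) hj1)
      (not_lt.mpr (le_of_lt (minIdx_min hnd1 hne1 (by omega) (by omega))))
  have hnQ2 : ∀ j, minIdx l₂ < j → j < n → ¬ Ql l₂ j := by
    intro j hj1 hj2 hq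
    exact absurd (hq (minIdx l₂) hj1)
      (not_lt.mpr (le_of_lt (minIdx_min hnd2 hne2 (by omega) (by omega))))
  have hgeq : minIdx l₁ = minIdx l₂ := by
    rcases lt_trichotomy (minIdx l₁) (minIdx l₂) with h | h | h
    · exact absurd ((hQ _ hg2lt).mpr hQ2) (hnQ1 _ h hg2lt)
    · exact h
    · exact absurd ((hQ _ hg1lt).mp hQ1) (hnQ2 _ h hg1lt)
  obtain ⟨g, hg1, hg2⟩ : ∃ g, minIdx l₁ = g ∧ minIdx l₂ = g := ⟨minIdx l₁, rfl, hgeq.symm⟩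
  have hglt : g < n := hg1 ▸ hg1lt
  have hmin1 : ∀ j < l₁.length, j ≠ g → gD l₁ g < gD l₁ j := by
    intro j hj hjg
    rw [← hg1] at hjg ⊢; exact minIdx_min hnd1 hne1 hj hjg
  have hmin2 : ∀ j < l₂.length, j ≠ g → gD l₂ g < gD l₂ j := by
    intro j hj hjg
    rw [← hg2] at hjg ⊢; exact minIdx_min hnd2 hne2 hj hjg
  rw [ctreeL_eq hne1, ctreeL_eq hne2, hg1, hg2]
  congr 1
  · apply ih g hglt
    · rw [List.length_take]; omega
    · rw [List.length_take]; omega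
    · exact (List.take_sublist g l₁).nodup hnd1
    · exact (List.take_sublist g l₂).nodup hnd2
    · intro i hi
      rw [Ql_take hi, Ql_take hi]; exact hQ i (by omega)
    · intro i hi j
      rw [Pl_take hi, Pl_take hi]; exact hP i (by omega) j
  · apply ih (n - (g+1)) (by omega)
    · rw [List.length_drop]; omega
    · rw [List.length_drop]; omega
    · exact (List.drop_sublist (g+1) l₁).nodup hnd1
    · exact (List.drop_sublist (g+1) l₂).nodup hnd2
    · intro i hi
      rw [Ql_drop hmin1 (by omega), Ql_drop hmin2 (by omega)]
      exact hP (g + 1 + i) (by omega) g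
    · intro i hi j
      rw [Pl_drop (by omega), Pl_drop (by omega)]
      exact hP (g + 1 + i) (by omega) (g + 1 + j)

private lemma seqList_length (x : ℕ → ℤ) (m : ℕ) : (seqList x 1 m).length = m := by
  unfold seqList; simp

private lemma seqList_gD (x : ℕ → ℤ) {m i : ℕ} (hi : i < m) :
    gD (seqList x 1 m) i = x (i + 1) := by
  unfold gD seqList
  rw [List.getD_eq_getElem _ 0 (by simp; omega)]
  simp only [List.getElem_map, List.getElem_range]
  congr 1
  omega

private lemma seqList_nodup {x : ℕ → ℤ} {m : ℕ} (hx : Set.InjOn x (Set.Icc 1 m)) :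
    (seqList x 1 m).Nodup := by
  unfold seqList
  apply List.Nodup.map_on _ (List.nodup_range)
  intro a ha b hb hab
  simp only [List.mem_range] at ha hb
  have := hx (Set.mem_Icc.mpr ⟨by omega, by omega⟩) (Set.mem_Icc.mpr ⟨by omega, by omega⟩) hab
  omega

private lemma PD_eq_zero_iff {x : ℕ → ℤ} {h : ℕ} : PD x h = 0 ↔ ¬ (PDset x h).Nonempty := by
  constructor
  · intro hpd hne
    rw [PD, dif_pos hne] at hpd
    have hmem := (PDset x h).max'_mem hne
    have : (PDset x h).max' hne < h := (Finset.mem_Ico.mp (Finset.mem_filter.mp hmem).1).2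
    have : 1 ≤ (PDset x h).max' hne := (Finset.mem_Ico.mp (Finset.mem_filter.mp hmem).1).1
    omega
  · intro hne
    rw [PD, dif_neg hne]

private lemma Ql_char {x : ℕ → ℤ} {m : ℕ} (hx : Set.InjOn x (Set.Icc 1 m)) {i : ℕ} (hi : i < m) :
    Ql (seqList x 1 m) i ↔ PD x (i + 1) = 0 := by
  rw [PD_eq_zero_iff]
  constructor
  · intro hq hne
    obtain ⟨j, hj⟩ := hne
    have hjf := Finset.mem_filter.mp hj
    have hj1 := Finset.mem_Ico.mp hjf.1
    have hj2 := hjf.2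
    have := hq (j - 1) (by omega)
    rw [seqList_gD x hi, seqList_gD x (by omega), show j - 1 + 1 = j by omega] at this
    exact absurd hj2 (not_lt.mpr this.le)
  · intro hne j hj
    rw [seqList_gD x hi, seqList_gD x (by omega)]
    have hnm : (j + 1) ∉ PDset x (i + 1) := fun hmem => hne ⟨_, hmem⟩
    rw [PDset, Finset.mem_filter, Finset.mem_Ico] at hnm
    push_neg at hnm
    have hle := hnm ⟨by omega, by omega⟩
    rcases lt_or_eq_of_le hle with h | h
    · exact h
    · exfalso
      have := hx (Set.mem_Icc.mpr ⟨by omega, by omega⟩)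
        (Set.mem_Icc.mpr ⟨by omega, by omega⟩) h.symm
      omega

private lemma Pl_char {x : ℕ → ℤ} {m : ℕ} (hx : Set.InjOn x (Set.Icc 1 m)) {i : ℕ} (hi : i < m)
    (j : ℕ) : Pl (seqList x 1 m) i j ↔ 0 < PD x (i + 1) ∧ j + 1 + PD x (i + 1) = i + 1 := by
  constructor
  · rintro ⟨h1, h2, h3⟩
    rw [seqList_gD x hi, seqList_gD x (by omega)] at h2
    have hmem : j + 1 ∈ PDset x (i + 1) := by
      rw [PDset, Finset.mem_filter, Finset.mem_Ico]
      exact ⟨⟨by omega, by omega⟩, h2⟩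
    have hne : (PDset x (i+1)).Nonempty := ⟨_, hmem⟩
    have hmaxf := Finset.mem_filter.mp ((PDset x (i+1)).max'_mem hne)
    have hmaxIco := Finset.mem_Ico.mp hmaxf.1
    have hle : j + 1 ≤ (PDset x (i+1)).max' hne := Finset.le_max' _ _ hmem
    have hMeq : (PDset x (i+1)).max' hne = j + 1 := by
      by_contra hne2
      have hMgt : j + 1 < (PDset x (i+1)).max' hne := by omega
      have := h3 ((PDset x (i+1)).max' hne - 1) (by omega) (by omega)
      rw [seqList_gD x hi, seqList_gD x (by omega),
        show (PDset x (i+1)).max' hne - 1 + 1 = (PDset x (i+1)).max' hne by omega] at this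
      exact absurd hmaxf.2 (not_lt.mpr this.le)
    rw [PD, dif_pos hne, hMeq]
    constructor <;> omega
  · rintro ⟨h1, h2⟩
    have hne : (PDset x (i+1)).Nonempty := by
      by_contra hne
      rw [PD_eq_zero_iff.mpr hne] at h1; omega
    rw [PD, dif_pos hne] at h1 h2
    have hmaxf := Finset.mem_filter.mp ((PDset x (i+1)).max'_mem hne)
    have hmaxIco := Finset.mem_Ico.mp hmaxf.1
    have hMeq : (PDset x (i+1)).max' hne = j + 1 := by omega
    refine ⟨by omega, ?_, ?_⟩
    · rw [seqList_gD x hi, seqList_gD x (by omega)]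
      rw [hMeq] at hmaxf
      exact hmaxf.2
    · intro k hk1 hk2
      rw [seqList_gD x hi, seqList_gD x (by omega)]
      have hnm : (k + 1) ∉ PDset x (i + 1) := by
        intro hmem
        have := Finset.le_max' _ _ hmem
        omega
      rw [PDset, Finset.mem_filter, Finset.mem_Ico] at hnm
      push_neg at hnm
      have hle := hnm ⟨by omega, by omega⟩
      rcases lt_or_eq_of_le hle with h | h
      · exact h
      · exfalso
        have := hx (Set.mem_Icc.mpr ⟨by omega, by omega⟩)
          (Set.mem_Icc.mpr ⟨by omega, by omega⟩) h.symm
        omega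

end Stmt0Aux

theorem stmt0 (m : ℕ) (x y : ℕ → ℤ)
    (hx : Set.InjOn x (Set.Icc 1 m)) (hy : Set.InjOn y (Set.Icc 1 m))
    (hPD : ∀ h ∈ Finset.Icc 1 m, PD x h = PD y h) :
    ctreeOf m x = ctreeOf m y := by
  unfold ctreeOf
  apply core m _ _ (seqList_length x m) (seqList_length y m) (seqList_nodup hx) (seqList_nodup hy)
  · intro i hi
    rw [Ql_char hx hi, Ql_char hy hi, hPD (i+1) (Finset.mem_Icc.mpr ⟨by omega, by omega⟩)]
  · intro i hi j
    rw [Pl_char hx hi j, Pl_char hy hi j, hPD (i+1) (Finset.mem_Icc.mpr ⟨by omega, by omega⟩)]
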